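/- For all nonnegative integers t and all n ≥ 0, the numbers of overpartition t-tuples satisfy p̄_t(4n) ≡ p̄_t(n) (mod 4). -/
import Mathlib

/-- The number of overpartitions of `n`: a partition of `n` together with a
choice of which distinct part values are overlined (the first occurrence of a
part value may be overlined), so that the count is `∑_{λ ⊢ n} 2^{#distinct parts of λ}`. -/
def overpartitionCount (n : ℕ) : ℕ :=
  ∑ p : n.Partition, 2 ^ p.parts.toFinset.card

/-- The number of overpartition `t`-tuples of `n`: `t`-tuples of overpartitions
whose sizes sum to `n`. -/
def overpartitionTuples (t n : ℕ) : ℕ :=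
  ∑ c ∈ Finset.Nat.antidiagonalTuple t n, ∏ i, overpartitionCount (c i)

lemma parts_ne_zero {n : ℕ} (h : n ≠ 0) (p : n.Partition) : p.parts ≠ 0 := by
  intro hp
  exact h (by rw [← p.parts_sum, hp]; simp)

lemma card_one_distinct {n : ℕ} (h : n ≠ 0) :
    (Finset.univ.filter (fun p : n.Partition => p.parts.toFinset.card = 1)).card
      = n.divisors.card := by
  apply Finset.card_bij (fun p _ => Multiset.card p.parts)
  · rintro p hp
    rw [Finset.mem_filter] at hp
    obtain ⟨a, ha⟩ := Finset.card_eq_one.mp hp.2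
    have hall : ∀ b ∈ p.parts, b = a := by
      intro b hb
      have : b ∈ p.parts.toFinset := Multiset.mem_toFinset.mpr hb
      rw [ha] at this
      exact Finset.mem_singleton.mp this
    have hrep : p.parts = Multiset.replicate (Multiset.card p.parts) a :=
      Multiset.eq_replicate.mpr ⟨rfl, hall⟩
    have hsum : Multiset.card p.parts * a = n := by
      have := p.parts_sum
      rw [hrep] at this
      simpa [Multiset.sum_replicate] using this
    exact Nat.mem_divisors.mpr ⟨⟨a, hsum.symm⟩, h⟩
  · rintro p hp q hq hpq
    rw [Finset.mem_filter] at hp hq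
    obtain ⟨a, ha⟩ := Finset.card_eq_one.mp hp.2
    obtain ⟨b, hb⟩ := Finset.card_eq_one.mp hq.2
    have hallp : ∀ x ∈ p.parts, x = a := fun x hx => Finset.mem_singleton.mp
      (ha ▸ Multiset.mem_toFinset.mpr hx)
    have hallq : ∀ x ∈ q.parts, x = b := fun x hx => Finset.mem_singleton.mp
      (hb ▸ Multiset.mem_toFinset.mpr hx)
    have hrp : p.parts = Multiset.replicate (Multiset.card p.parts) a :=
      Multiset.eq_replicate.mpr ⟨rfl, hallp⟩
    have hrq : q.parts = Multiset.replicate (Multiset.card q.parts) b :=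
      Multiset.eq_replicate.mpr ⟨rfl, hallq⟩
    have hsp : Multiset.card p.parts * a = n := by
      have := p.parts_sum; rw [hrp] at this; simpa [Multiset.sum_replicate] using this
    have hsq : Multiset.card q.parts * b = n := by
      have := q.parts_sum; rw [hrq] at this; simpa [Multiset.sum_replicate] using this
    have hcne : Multiset.card p.parts ≠ 0 := by
      intro hc
      rw [hc, zero_mul] at hsp
      exact h hsp.symm
    have hab : a = b := by
      rw [← hpq] at hsq
      exact Nat.eq_of_mul_eq_mul_left (Nat.pos_of_ne_zero hcne) (hsp.trans hsq.symm)
    exact Nat.Partition.ext (by rw [hrp, hrq, hpq, hab])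
  · rintro m hm
    rw [Nat.mem_divisors] at hm
    have hm0 : m ≠ 0 := by
      rintro rfl
      exact hm.2 (Nat.eq_zero_of_zero_dvd hm.1)
    have hmpos : 0 < m := Nat.pos_of_ne_zero hm0
    have hd : 0 < n / m := Nat.div_pos (Nat.le_of_dvd (Nat.pos_of_ne_zero hm.2) hm.1) hmpos
    refine ⟨⟨Multiset.replicate m (n / m), ?_, ?_⟩, ?_, ?_⟩
    · intro i hi
      rw [Multiset.eq_of_mem_replicate hi]
      exact hd
    · rw [Multiset.sum_replicate, smul_eq_mul, Nat.mul_div_cancel' hm.1]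
    · rw [Finset.mem_filter]
      refine ⟨Finset.mem_univ _, ?_⟩
      simp [Multiset.toFinset_replicate, hm0]
    · simp

lemma even_op {n : ℕ} (h : n ≠ 0) : 2 ∣ overpartitionCount n := by
  unfold overpartitionCount
  apply Finset.dvd_sum
  intro p _
  apply dvd_pow_self
  simp only [ne_eq, Finset.card_eq_zero, Multiset.toFinset_eq_empty]
  exact parts_ne_zero h p

lemma tau_parity (n : ℕ) (h : n ≠ 0) :
    (4 * n).divisors.card ≡ n.divisors.card [MOD 2] := by
  rw [← ZMod.natCast_eq_natCast_iff]
  rw [Nat.card_divisors (by positivity), Nat.card_divisors h]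
  have h4 : (4 * n).factorization = n.factorization + Finsupp.single 2 2 := by
    rw [Nat.factorization_mul (by norm_num) h]
    have h42 : (4:ℕ) = 2 ^ 2 := by norm_num
    rw [h42, Nat.Prime.factorization_pow Nat.prime_two, add_comm]
  have hsub : n.primeFactors ⊆ (4 * n).primeFactors :=
    Nat.primeFactors_mono (dvd_mul_left n 4) (by positivity)
  push_cast
  calc (∏ p ∈ (4 * n).primeFactors, ((4 * n).factorization p + 1 : ZMod 2))
      = ∏ p ∈ (4 * n).primeFactors, ((n.factorization p + 1 : ℕ) : ZMod 2) := by
        apply Finset.prod_congr rfl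
        intro p _
        rw [h4]
        push_cast [Finsupp.add_apply]
        rcases eq_or_ne p 2 with rfl | hp
        · simp [Finsupp.single_apply]
          decide
        · simp [Finsupp.single_apply, hp.symm]
    _ = ∏ p ∈ n.primeFactors, ((n.factorization p + 1 : ℕ) : ZMod 2) := by
        refine (Finset.prod_subset hsub ?_).symm
        intro p _ hp
        have : n.factorization p = 0 := by
          rw [← Finsupp.notMem_support_iff, Nat.support_factorization]
          exact hp
        simp [this]
    _ = ∏ p ∈ n.primeFactors, ((n.factorization p : ZMod 2) + 1) := by push_cast; rfl

lemma op_mod4 {n : ℕ} (h : n ≠ 0) :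
    (overpartitionCount n : ZMod 4) = 2 * n.divisors.card := by
  unfold overpartitionCount
  push_cast
  calc (∑ p : n.Partition, (2 : ZMod 4) ^ p.parts.toFinset.card)
      = ∑ p : n.Partition, (if p.parts.toFinset.card = 1 then (2 : ZMod 4) else 0) := by
        apply Finset.sum_congr rfl
        intro p _
        have hd : p.parts.toFinset.card ≠ 0 := by
          simp only [ne_eq, Finset.card_eq_zero, Multiset.toFinset_eq_empty]
          exact parts_ne_zero h p
        match hdd : p.parts.toFinset.card with
        | 0 => exact absurd hdd hd
        | 1 => simp
        | (k+2) =>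
          rw [if_neg (by omega)]
          rw [pow_succ, pow_succ, mul_assoc]
          have : (2 : ZMod 4) * 2 = 0 := by decide
          rw [this, mul_zero]
    _ = (Finset.univ.filter (fun p : n.Partition => p.parts.toFinset.card = 1)).card
          • (2 : ZMod 4) := by
        rw [← Finset.sum_filter, Finset.sum_const]
    _ = 2 * n.divisors.card := by
        rw [card_one_distinct h, nsmul_eq_mul, mul_comm]

lemma op_zero : overpartitionCount 0 = 1 := by decide

lemma tuples_mod {t n : ℕ} (h : n ≠ 0) :
    (overpartitionTuples t n : ZMod 4) = t * overpartitionCount n := by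
  classical
  unfold overpartitionTuples
  push_cast
  rw [← Finset.sum_filter_add_sum_filter_not (Finset.Nat.antidiagonalTuple t n)
    (fun c => ∃ i, c = Pi.single i n)]
  have h2 : ∑ c ∈ (Finset.Nat.antidiagonalTuple t n).filter
      (fun c => ¬ ∃ i, c = Pi.single i n), ∏ i, (overpartitionCount (c i) : ZMod 4) = 0 := by
    apply Finset.sum_eq_zero
    intro c hc
    rw [Finset.mem_filter, Finset.Nat.mem_antidiagonalTuple] at hc
    obtain ⟨hsum, hnp⟩ := hc
    -- find two distinct nonzero coordinates
    have hex : ∃ i, c i ≠ 0 := by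
      by_contra hcon
      push_neg at hcon
      apply h
      rw [← hsum]
      exact Finset.sum_eq_zero fun i _ => hcon i
    obtain ⟨i, hi⟩ := hex
    have hex2 : ∃ j, j ≠ i ∧ c j ≠ 0 := by
      by_contra hcon
      push_neg at hcon
      apply hnp
      refine ⟨i, funext fun j => ?_⟩
      rcases eq_or_ne j i with rfl | hj
      · rw [Pi.single_eq_same, ← hsum]
        rw [← Finset.sum_subset (Finset.subset_univ {j})]
        · simp
        · intro k _ hk
          exact hcon k (by simpa using hk)
      · rw [Pi.single_eq_of_ne hj]
        by_contra hne
        exact hne (hcon j hj)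
    obtain ⟨j, hji, hj⟩ := hex2
    rw [← Nat.cast_prod, ZMod.natCast_eq_zero_iff]
    have hdvd : overpartitionCount (c j) * overpartitionCount (c i)
        ∣ ∏ k, overpartitionCount (c k) := by
      have hd := Finset.prod_dvd_prod_of_subset ({j, i} : Finset (Fin t)) Finset.univ
        (fun k => overpartitionCount (c k)) (Finset.subset_univ _)
      rwa [Finset.prod_pair hji] at hd
    calc (4 : ℕ) = 2 * 2 := by norm_num
      _ ∣ overpartitionCount (c j) * overpartitionCount (c i) :=
          mul_dvd_mul (even_op hj) (even_op hi)
      _ ∣ _ := hdvd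
  rw [h2, add_zero]
  have h3 : (Finset.Nat.antidiagonalTuple t n).filter (fun c => ∃ i, c = Pi.single i n)
      = Finset.univ.image (fun i : Fin t => Pi.single i n) := by
    ext c
    rw [Finset.mem_filter, Finset.mem_image, Finset.Nat.mem_antidiagonalTuple]
    constructor
    · rintro ⟨-, i, rfl⟩
      exact ⟨i, Finset.mem_univ _, rfl⟩
    · rintro ⟨i, -, rfl⟩
      refine ⟨?_, i, rfl⟩
      simp [Finset.sum_pi_single']
  have hinj : ∀ i ∈ (Finset.univ : Finset (Fin t)), ∀ j ∈ Finset.univ,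
      (Pi.single i n : Fin t → ℕ) = Pi.single j n → i = j := by
    intro i _ j _ hij
    by_contra hne
    have hc := congrFun hij i
    rw [Pi.single_eq_same, Pi.single_eq_of_ne hne] at hc
    exact h hc
  rw [h3, Finset.sum_image hinj]
  · have h4 : ∀ i : Fin t, ∏ j, (overpartitionCount ((Pi.single i n : Fin t → ℕ) j) : ZMod 4)
        = (overpartitionCount n : ZMod 4) := by
      intro i
      rw [Finset.prod_eq_single i]
      · rw [Pi.single_eq_same]
      · intro j _ hj
        rw [Pi.single_eq_of_ne hj, op_zero, Nat.cast_one]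
      · intro hi
        exact absurd (Finset.mem_univ i) hi
    simp only [h4]
    rw [Finset.sum_const, Finset.card_univ, Fintype.card_fin, nsmul_eq_mul]

theorem overpartitionTuples_four_n_mod_four (t n : ℕ) :
    overpartitionTuples t (4 * n) ≡ overpartitionTuples t n [MOD 4] := by
  rcases eq_or_ne n 0 with rfl | h
  · rfl
  rw [← ZMod.natCast_eq_natCast_iff]
  rw [tuples_mod (by positivity), tuples_mod h, op_mod4 (by positivity), op_mod4 h]
  have : ((4 * n).divisors.card : ZMod 2) = n.divisors.card := by
    rw [ZMod.natCast_eq_natCast_iff]; exact tau_parity n h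
  have h2 : (2 * (4 * n).divisors.card : ℕ) ≡ 2 * n.divisors.card [MOD 4] := by
    have := Nat.ModEq.mul_left' (c := 2) (tau_parity n h)
    simpa using this
  have h3 : ((2 * (4 * n).divisors.card : ℕ) : ZMod 4) = ((2 * n.divisors.card : ℕ) : ZMod 4) := by
    rw [ZMod.natCast_eq_natCast_iff]; exact h2
  push_cast at h3
  rw [h3]
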